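/- arXiv:1601.07194 — 3 statements merged into one kernel-verified Lean document; each statement's English description precedes it below -/
import Mathlib

section
/- Let u be a quasi-definite, centrally symmetric moment functional on Π^d and suppose v = λ(x)u is quasi-definite and centrally symmetric, where λ(x) = Σ_{1≤i≤j≤d} a^{(2)}_{ij} x_i x_j + a^{(0)} has exact total degree 2. Then the monic OPS {ℙ_n} of u and {ℚ_n} of v are related by ℙ_0 = ℚ_0, ℙ_1 = ℚ_1, and ℙ_n = ℚ_n + N_n ℚ_{n−2} for all n ≥ 2, where N_n = H_n A_{n−2,2}^t Ĥ_{n−2}^{−1}, with H_n = ⟨u, ℙ_n ℙ_n^t⟩ and Ĥ_n = ⟨v, ℚ_n ℚ_n^t⟩. -/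
open MvPolynomial Matrix

/-- The index set for monomials of total degree `n` in `d` variables:
multi-indices (exponent tuples) summing to `n`. Its cardinality is `r_n^d = C(n+d-1,n)`. -/
abbrev Idx (d n : ℕ) : Type := {ν : Fin d → ℕ // ν ∈ Finset.Nat.antidiagonalTuple d n}

/-- The monomial `x^ν` associated with a multi-index `ν` of total degree `n`;
the family `fun α : Idx d n => monIdx α` is the canonical vector `𝕏_n`. -/
noncomputable def monIdx {d n : ℕ} (α : Idx d n) : MvPolynomial (Fin d) ℝ :=
  MvPolynomial.monomial (Finsupp.equivFunOnFinite.symm α.1) 1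

/-- A polynomial system (PS): a sequence of vectors `ℙ_n` of size `r_n^d` whose
entries are polynomials of total degree `n`, the entries of `ℙ_0,…,ℙ_n` forming a
basis of the polynomials of total degree at most `n`. -/
structure PolySystem (d : ℕ) where
  vec : (n : ℕ) → Idx d n → MvPolynomial (Fin d) ℝ
  degree_eq : ∀ n α, (vec n α).totalDegree = n
  indep : LinearIndependent ℝ (fun p : (Σ n : ℕ, Idx d n) => vec p.1 p.2)
  spans : ∀ (n : ℕ) (p : MvPolynomial (Fin d) ℝ), p.totalDegree ≤ n →
    p ∈ Submodule.span ℝ {q | ∃ m ≤ n, ∃ α : Idx d m, q = vec m α}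

/-- `{ℙ_n}` is an orthogonal polynomial system (OPS) with respect to the moment
functional `u` : `⟨u, 𝕏_m ℙ_n^t⟩ = 0` for `m < n` and `⟨u, 𝕏_n ℙ_n^t⟩` nonsingular. -/
def IsOPS {d : ℕ} (u : MvPolynomial (Fin d) ℝ →ₗ[ℝ] ℝ) (P : PolySystem d) : Prop :=
  (∀ m n : ℕ, m < n → ∀ (α : Idx d m) (β : Idx d n), u (monIdx α * P.vec n β) = 0) ∧
  (∀ n : ℕ, IsUnit (Matrix.of fun α β : Idx d n => u (monIdx α * P.vec n β)).det)

/-- `u` is quasi-definite iff it admits an OPS. -/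
def QuasiDefinite {d : ℕ} (u : MvPolynomial (Fin d) ℝ →ₗ[ℝ] ℝ) : Prop :=
  ∃ P : PolySystem d, IsOPS u P

/-- `H_n = ⟨u, ℙ_n ℙ_n^t⟩`. -/
noncomputable def Hmat {d : ℕ} (u : MvPolynomial (Fin d) ℝ →ₗ[ℝ] ℝ) (P : PolySystem d)
    (n : ℕ) : Matrix (Idx d n) (Idx d n) ℝ :=
  Matrix.of fun α β => u (P.vec n α * P.vec n β)

/-- `P_m(u;x,y) = ℙ_m(x)^t H_m⁻¹ ℙ_m(y)`. -/
noncomputable def kerP {d : ℕ} (u : MvPolynomial (Fin d) ℝ →ₗ[ℝ] ℝ) (P : PolySystem d)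
    (m : ℕ) (x y : Fin d → ℝ) : ℝ :=
  ∑ α, ∑ β, eval x (P.vec m α) * (Hmat u P m)⁻¹ α β * eval y (P.vec m β)

/-- `kerLT u P n = K_{n-1}(u;·,·) = Σ_{m<n} P_m(u;·,·)`, so that `kerLT u P 0 = K_{-1} = 0`. -/
noncomputable def kerLT {d : ℕ} (u : MvPolynomial (Fin d) ℝ →ₗ[ℝ] ℝ) (P : PolySystem d)
    (n : ℕ) (x y : Fin d → ℝ) : ℝ :=
  ∑ m ∈ Finset.range n, kerP u P m x y

/-- `𝖯_n(ξ) = (ℙ_n(ξ_1)|⋯|ℙ_n(ξ_N))`. -/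
noncomputable def Pmat {d N : ℕ} (P : PolySystem d) (ξ : Fin N → (Fin d → ℝ)) (n : ℕ) :
    Matrix (Idx d n) (Fin N) ℝ :=
  Matrix.of fun α i => eval (ξ i) (P.vec n α)

/-- `Kmat u P ξ n = 𝒦_{n-1} = (K_{n-1}(u;ξ_i,ξ_j))_{i,j}`, with `𝒦_{-1} = 0`. -/
noncomputable def Kmat {d N : ℕ} (u : MvPolynomial (Fin d) ℝ →ₗ[ℝ] ℝ) (P : PolySystem d)
    (ξ : Fin N → (Fin d → ℝ)) (n : ℕ) : Matrix (Fin N) (Fin N) ℝ :=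
  Matrix.of fun i j => kerLT u P n (ξ i) (ξ j)

/-- `Kvec u P ξ n x = 𝖪_{n-1}(ξ,x) = (K_{n-1}(u;ξ_1,x),…,K_{n-1}(u;ξ_N,x))^t`, with `𝖪_{-1}=0`. -/
noncomputable def Kvec {d N : ℕ} (u : MvPolynomial (Fin d) ℝ →ₗ[ℝ] ℝ) (P : PolySystem d)
    (ξ : Fin N → (Fin d → ℝ)) (n : ℕ) (x : Fin d → ℝ) : Fin N → ℝ :=
  fun i => kerLT u P n (ξ i) x

/-- A PS is monic if the degree-`n` homogeneous part of the entry of `ℙ_n` indexed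
by `α` is exactly the monomial `x^α`. -/
def PolySystem.IsMonic {d : ℕ} (P : PolySystem d) : Prop :=
  ∀ (n : ℕ) (α : Idx d n) (ν : Fin d →₀ ℕ), (ν.sum fun _ e => e) = n →
    MvPolynomial.coeff ν (P.vec n α) = if ν = Finsupp.equivFunOnFinite.symm α.1 then 1 else 0

/-- Multiplication of a real matrix times a vector of polynomials. -/
noncomputable def matVec {d : ℕ} {a b : Type} [Fintype b] (M : Matrix a b ℝ)
    (w : b → MvPolynomial (Fin d) ℝ) (i : a) : MvPolynomial (Fin d) ℝ :=
  ∑ j, M i j • w j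

/-- The matrix `L_{n,i}` determined by `x_i 𝕏_n = L_{n,i} 𝕏_{n+1}`. -/
noncomputable def Lmat (d n : ℕ) (i : Fin d) : Matrix (Idx d n) (Idx d (n + 1)) ℝ :=
  Matrix.of fun α β => if β.1 = (fun j => α.1 j + if j = i then 1 else 0) then 1 else 0

/-- The unique multi-index of degree 0. -/
def zeroIdx {d : ℕ} : Idx d 0 :=
  ⟨fun _ => 0, by simp [Finset.Nat.mem_antidiagonalTuple]⟩

/-- The degree-2 multi-index `e_i + e_j`. -/
def e2 {d : ℕ} (i j : Fin d) : Idx d 2 :=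
  ⟨fun k => (if k = i then 1 else 0) + (if k = j then 1 else 0), by
    simp [Finset.Nat.mem_antidiagonalTuple, Finset.sum_add_distrib]⟩

/-- `A_{h,2} = Σ_{1≤i≤j≤d} a^{(2)}_{ij} L_{h,j} L_{h+1,i}`. -/
noncomputable def Amat2 {d : ℕ} (a2 : Idx d 2 → ℝ) (h : ℕ) :
    Matrix (Idx d h) (Idx d (h + 2)) ℝ :=
  ∑ i : Fin d, ∑ j : Fin d,
    if i ≤ j then a2 (e2 i j) • (Lmat d h j * Lmat d (h + 1) i) else 0

/-- The polynomial `λ(x) = a_2·𝕏_2 + a_1·𝕏_1 + a_0`. -/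
noncomputable def lamPoly {d : ℕ} (a2 : Idx d 2 → ℝ) (a1 : Idx d 1 → ℝ) (a0 : ℝ) :
    MvPolynomial (Fin d) ℝ :=
  (∑ α : Idx d 2, a2 α • monIdx α) + (∑ α : Idx d 1, a1 α • monIdx α) + MvPolynomial.C a0

/-- A moment functional is centrally symmetric if all its moments of odd order vanish. -/
def CentrallySymmetric {d : ℕ} (u : MvPolynomial (Fin d) ℝ →ₗ[ℝ] ℝ) : Prop :=
  ∀ ν : Fin d →₀ ℕ, Odd (ν.sum fun _ e => e) → u (MvPolynomial.monomial ν 1) = 0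

namespace Aux
variable {d : ℕ}

/-- degree of a finsupp -/
noncomputable abbrev degS (ν : Fin d →₀ ℕ) : ℕ := ν.sum fun _ e => e

lemma degS_eq (ν : Fin d →₀ ℕ) : degS ν = ∑ i, ν i :=
  Finsupp.sum_fintype _ _ (fun _ => rfl)

def toIdx (ν : Fin d →₀ ℕ) (m : ℕ) (h : degS ν = m) : Idx d m :=
  ⟨⇑ν, by rw [Finset.Nat.mem_antidiagonalTuple, ← degS_eq, h]⟩

lemma monIdx_toIdx (ν : Fin d →₀ ℕ) (m : ℕ) (h : degS ν = m) :
    monIdx (toIdx ν m h) = monomial ν 1 := by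
  simp [monIdx, toIdx, Finsupp.equivFunOnFinite_symm_coe]

lemma idx_sum {m : ℕ} (α : Idx d m) : ∑ i, α.1 i = m :=
  Finset.Nat.mem_antidiagonalTuple.mp α.2

lemma degS_idx {m : ℕ} (α : Idx d m) : degS (Finsupp.equivFunOnFinite.symm α.1) = m := by
  rw [degS_eq]
  simpa using idx_sum α

lemma monIdx_eq_monomial {m : ℕ} (α : Idx d m) :
    monIdx α = monomial (Finsupp.equivFunOnFinite.symm α.1) 1 := rfl

lemma coeff_monIdx {m : ℕ} (α : Idx d m) (ν : Fin d →₀ ℕ) :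
    coeff ν (monIdx α) = if ν = Finsupp.equivFunOnFinite.symm α.1 then 1 else 0 := by
  rw [monIdx_eq_monomial, coeff_monomial]
  by_cases h : ν = Finsupp.equivFunOnFinite.symm α.1 <;> simp [h, eq_comm]

/-- the kill lemma -/
lemma kill (u : MvPolynomial (Fin d) ℝ →ₗ[ℝ] ℝ) (r q : MvPolynomial (Fin d) ℝ) (n : ℕ)
    (horth : ∀ m < n, ∀ γ : Idx d m, u (monIdx γ * r) = 0)
    (hq : ∀ ν ∈ q.support, degS ν < n) : u (q * r) = 0 := by
  conv_lhs => rw [q.as_sum, Finset.sum_mul, map_sum]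
  refine Finset.sum_eq_zero fun ν hν => ?_
  have h1 : (monomial ν (coeff ν q)) * r = coeff ν q • (monIdx (toIdx ν (degS ν) rfl) * r) := by
    rw [monIdx_toIdx, ← smul_mul_assoc, smul_monomial, smul_eq_mul, mul_one]
  rw [h1, _root_.map_smul, horth _ (hq ν hν), smul_zero]

lemma coeff_vec_high (P : PolySystem d) {n : ℕ} (α : Idx d n) {ν : Fin d →₀ ℕ}
    (h : n < degS ν) : coeff ν (P.vec n α) = 0 := by
  apply coeff_eq_zero_of_totalDegree_lt
  rw [P.degree_eq]
  exact h

lemma supp_deg_lt (P : PolySystem d) (hm : P.IsMonic) (n : ℕ) (α : Idx d n) :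
    ∀ ν ∈ (P.vec n α - monIdx α).support, degS ν < n := by
  intro ν hν
  by_contra h
  push_neg at h
  apply mem_support_iff.mp hν
  rcases eq_or_lt_of_le h with heq | hlt
  · rw [coeff_sub, hm n α ν heq.symm, coeff_monIdx, sub_self]
  · rw [coeff_sub, coeff_vec_high P α hlt, coeff_monIdx, if_neg, sub_self]
    rintro rfl
    rw [degS_idx] at hlt
    exact lt_irrefl n hlt

lemma supp_deg_le (P : PolySystem d) (n : ℕ) (α : Idx d n) :
    ∀ ν ∈ (P.vec n α).support, degS ν ≤ n := by
  intro ν hν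
  have := le_totalDegree hν
  rwa [P.degree_eq] at this

lemma Hmat_eq (u : MvPolynomial (Fin d) ℝ →ₗ[ℝ] ℝ) (P : PolySystem d)
    (hm : P.IsMonic) (hOPS : IsOPS u P) (n : ℕ) (α β : Idx d n) :
    Hmat u P n α β = u (monIdx α * P.vec n β) := by
  have hsplit : P.vec n α * P.vec n β
      = monIdx α * P.vec n β + (P.vec n α - monIdx α) * P.vec n β := by ring
  show u (P.vec n α * P.vec n β) = _
  rw [hsplit, map_add, kill u (P.vec n β) _ n (fun m hmn γ => hOPS.1 m n hmn γ β)
    (supp_deg_lt P hm n α), add_zero]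

lemma Hmat_symm (u : MvPolynomial (Fin d) ℝ →ₗ[ℝ] ℝ) (P : PolySystem d)
    (n : ℕ) (α β : Idx d n) : Hmat u P n α β = Hmat u P n β α := by
  show u (P.vec n α * P.vec n β) = u (P.vec n β * P.vec n α)
  rw [mul_comm]

lemma Hmat_det (u : MvPolynomial (Fin d) ℝ →ₗ[ℝ] ℝ) (P : PolySystem d)
    (hm : P.IsMonic) (hOPS : IsOPS u P) (n : ℕ) : IsUnit (Hmat u P n).det := by
  have : Hmat u P n = Matrix.of fun α β : Idx d n => u (monIdx α * P.vec n β) := by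
    ext α β
    exact Hmat_eq u P hm hOPS n α β
  rw [this]
  exact hOPS.2 n

lemma eq_zero_of_orth (u : MvPolynomial (Fin d) ℝ →ₗ[ℝ] ℝ) (Q : PolySystem d)
    (hm : Q.IsMonic) (hOPS : IsOPS u Q) (n : ℕ) (r : MvPolynomial (Fin d) ℝ)
    (hdeg : ∀ ν : Fin d →₀ ℕ, n ≤ degS ν → coeff ν r = 0)
    (horth : ∀ m < n, ∀ γ : Idx d m, u (monIdx γ * r) = 0) : r = 0 := by
  cases n with
  | zero => ext ν; simpa using hdeg ν (Nat.zero_le _)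
  | succ N =>
    have hdle : r.totalDegree ≤ N := by
      refine Finset.sup_le fun ν hν => ?_
      by_contra h
      push_neg at h
      exact mem_support_iff.mp hν (hdeg ν h)
    have hspan := Q.spans N r hdle
    have hset : {q | ∃ m ≤ N, ∃ α : Idx d m, q = Q.vec m α}
        = Set.range (fun p : Σ m : Fin (N+1), Idx d m.1 => Q.vec p.1.1 p.2) := by
      ext q
      constructor
      · rintro ⟨m, hm', α, rfl⟩
        exact ⟨⟨⟨m, Nat.lt_succ_of_le hm'⟩, α⟩, rfl⟩
      · rintro ⟨⟨m, α⟩, rfl⟩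
        exact ⟨m.1, Nat.lt_succ_iff.mp m.2, α, rfl⟩
    rw [hset] at hspan
    obtain ⟨c, hc⟩ := (Submodule.mem_span_range_iff_exists_fun ℝ).mp hspan
    have hck : ∀ k : Fin (N+1), ∀ α : Idx d k.1, c ⟨k, α⟩ = 0 := by
      intro k
      have key : ∀ γ : Idx d k.1, (Hmat u Q k.1 *ᵥ fun α => c ⟨k, α⟩) γ = 0 := by
        intro γ
        have h0 : u (Q.vec k.1 γ * r) = 0 := by
          refine kill u r _ (N+1) horth fun ν hν => Nat.lt_succ_of_le ?_
          exact le_trans (supp_deg_le Q k.1 γ ν hν) (Nat.lt_succ_iff.mp k.2)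
        rw [← hc, Finset.mul_sum, map_sum] at h0
        have hsig : ∑ p : Σ m : Fin (N+1), Idx d m.1,
            u (Q.vec k.1 γ * (c p • Q.vec p.1.1 p.2))
            = ∑ α : Idx d k.1, Hmat u Q k.1 γ α * c ⟨k, α⟩ := by
          rw [← Finset.univ_sigma_univ, Finset.sum_sigma]
          have h1 : ∀ m : Fin (N+1), m ∈ Finset.univ → m ≠ k →
              ∑ α : Idx d m.1, u (Q.vec k.1 γ * (c ⟨m, α⟩ • Q.vec m.1 α)) = 0 := by
            intro m _ hmk
            refine Finset.sum_eq_zero fun α _ => ?_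
            have hz : u (Q.vec k.1 γ * Q.vec m.1 α) = 0 := by
              rcases lt_or_gt_of_ne (fun h : (m:ℕ) = (k:ℕ) => hmk (Fin.ext h)) with hlt | hgt
              · rw [mul_comm]
                exact kill u (Q.vec k.1 γ) _ k.1 (fun m' hm' δ => hOPS.1 m' k.1 hm' δ γ)
                  fun ν hν => lt_of_le_of_lt (supp_deg_le Q m.1 α ν hν) hlt
              · exact kill u (Q.vec m.1 α) _ m.1 (fun m' hm' δ => hOPS.1 m' m.1 hm' δ α)
                  fun ν hν => lt_of_le_of_lt (supp_deg_le Q k.1 γ ν hν) hgt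
            rw [mul_smul_comm, _root_.map_smul, smul_eq_mul, hz, mul_zero]
          rw [Finset.sum_eq_single k h1 (fun h => absurd (Finset.mem_univ k) h)]
          refine Finset.sum_congr rfl fun α _ => ?_
          rw [mul_smul_comm, _root_.map_smul, smul_eq_mul, mul_comm]
          rfl
        rw [hsig] at h0
        rw [Matrix.mulVec]
        simpa [dotProduct] using h0
      intro α
      have hz : (Hmat u Q k.1 *ᵥ fun β => c ⟨k, β⟩) = 0 := funext key
      have h2 : (Hmat u Q k.1)⁻¹ *ᵥ ((Hmat u Q k.1) *ᵥ fun β => c ⟨k, β⟩)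
          = fun β => c ⟨k, β⟩ := by
        rw [Matrix.mulVec_mulVec, Matrix.nonsing_inv_mul _ (Hmat_det u Q hm hOPS k.1),
          Matrix.one_mulVec]
      rw [hz, Matrix.mulVec_zero] at h2
      exact (congrFun h2 α).symm
    rw [← hc]
    refine Finset.sum_eq_zero fun p _ => ?_
    rw [hck p.1 p.2, zero_smul]

noncomputable def sigmaNeg (d : ℕ) : MvPolynomial (Fin d) ℝ →ₐ[ℝ] MvPolynomial (Fin d) ℝ :=
  aeval fun i => -X i

lemma sigmaNeg_monomial (ν : Fin d →₀ ℕ) (c : ℝ) :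
    sigmaNeg d (monomial ν c) = (-1:ℝ)^(degS ν) • monomial ν c := by
  rw [sigmaNeg, aeval_monomial, monomial_eq]
  rw [Finsupp.prod_pow, Finsupp.prod_pow]
  rw [Finset.prod_congr rfl (fun i (_ : i ∈ Finset.univ) =>
    (neg_pow (X i : MvPolynomial (Fin d) ℝ) (ν i) : (-X i)^(ν i) = _))]
  rw [Finset.prod_mul_distrib, Finset.prod_pow_eq_pow_sum, ← degS_eq]
  rw [smul_eq_C_mul, map_pow, map_neg (C : ℝ →+* MvPolynomial (Fin d) ℝ) 1, C_1,
    algebraMap_eq]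
  ring

lemma coeff_sigmaNeg (p : MvPolynomial (Fin d) ℝ) (ν : Fin d →₀ ℕ) :
    coeff ν (sigmaNeg d p) = (-1:ℝ)^(degS ν) * coeff ν p := by
  conv_lhs => rw [p.as_sum, map_sum]
  rw [coeff_sum]
  simp only [sigmaNeg_monomial, coeff_smul, coeff_monomial, smul_eq_mul, mul_ite, mul_zero]
  rw [Finset.sum_ite_eq' p.support ν (fun μ => (-1:ℝ)^(degS μ) * coeff μ p)]
  by_cases h : ν ∈ p.support
  · rw [if_pos h]
  · rw [if_neg h, notMem_support_iff.mp h, mul_zero]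

lemma u_sigmaNeg (u : MvPolynomial (Fin d) ℝ →ₗ[ℝ] ℝ) (hcs : CentrallySymmetric u)
    (p : MvPolynomial (Fin d) ℝ) : u (sigmaNeg d p) = u p := by
  conv_lhs => rw [p.as_sum, map_sum, map_sum]
  conv_rhs => rw [p.as_sum, map_sum]
  refine Finset.sum_congr rfl fun μ _ => ?_
  rw [sigmaNeg_monomial, _root_.map_smul, smul_eq_mul]
  by_cases hpar : Even (degS μ)
  · rw [hpar.neg_one_pow, one_mul]
  · have hodd : Odd (degS μ) := by
      rw [Nat.even_iff] at hpar
      rw [Nat.odd_iff]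
      omega
    have h0 : u (monomial μ (coeff μ p)) = 0 := by
      have heq : monomial μ (coeff μ p) = coeff μ p • monomial μ 1 := by
        rw [smul_monomial, smul_eq_mul, mul_one]
      rw [heq, _root_.map_smul, hcs μ hodd, smul_zero]
    rw [h0, mul_zero]

lemma oddKill (u : MvPolynomial (Fin d) ℝ →ₗ[ℝ] ℝ) (hcs : CentrallySymmetric u)
    (p : MvPolynomial (Fin d) ℝ) (h : ∀ ν ∈ p.support, Odd (degS ν)) : u p = 0 := by
  conv_lhs => rw [p.as_sum, map_sum]
  refine Finset.sum_eq_zero fun μ hμ => ?_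
  have : monomial μ (coeff μ p) = coeff μ p • monomial μ 1 := by
    rw [smul_monomial, smul_eq_mul, mul_one]
  rw [this, _root_.map_smul, hcs μ (h μ hμ), smul_zero]

lemma parity_coeff (u : MvPolynomial (Fin d) ℝ →ₗ[ℝ] ℝ) (hcs : CentrallySymmetric u)
    (P : PolySystem d) (hm : P.IsMonic) (hOPS : IsOPS u P) (n : ℕ) (α : Idx d n)
    (ν : Fin d →₀ ℕ) (hpar : (degS ν) % 2 ≠ n % 2) : coeff ν (P.vec n α) = 0 := by
  set r := P.vec n α - (-1:ℝ)^n • sigmaNeg d (P.vec n α) with hr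
  have hr0 : r = 0 := by
    refine eq_zero_of_orth u P hm hOPS n r ?_ ?_
    · intro μ hμ
      rw [hr, coeff_sub, coeff_smul, coeff_sigmaNeg, smul_eq_mul]
      rcases eq_or_lt_of_le hμ with heq | hlt
      · rw [← heq, ← mul_assoc, ← pow_add, Even.neg_one_pow ⟨n, rfl⟩, one_mul, sub_self]
      · rw [coeff_vec_high P α hlt]; ring
    · intro m hmn γ
      have h1 : u (monIdx γ * P.vec n α) = 0 := hOPS.1 m n hmn γ α
      have h2 : monIdx γ * sigmaNeg d (P.vec n α)
          = (-1:ℝ)^m • sigmaNeg d (monIdx γ * P.vec n α) := by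
        rw [_root_.map_mul, monIdx_eq_monomial, sigmaNeg_monomial, degS_idx, smul_mul_assoc,
          ← smul_assoc, smul_eq_mul, ← pow_add, Even.neg_one_pow ⟨m, rfl⟩, one_smul]
      rw [hr, mul_sub, map_sub, h1, mul_smul_comm, h2, smul_smul, _root_.map_smul,
        u_sigmaNeg u hcs, h1, smul_zero, sub_zero]
  have hc := congrArg (coeff ν) hr0
  rw [hr, coeff_sub, coeff_smul, coeff_sigmaNeg, coeff_zero, smul_eq_mul, ← mul_assoc,
    ← pow_add] at hc
  have hodd : (n + degS ν) % 2 = 1 := by omega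
  rw [Odd.neg_one_pow (Nat.odd_iff.mpr hodd)] at hc
  linarith

def addIdx {m : ℕ} (δ : Idx d 2) (γ : Idx d m) : Idx d (m + 2) :=
  ⟨fun k => γ.1 k + δ.1 k, by
    rw [Finset.Nat.mem_antidiagonalTuple, Finset.sum_add_distrib, idx_sum γ, idx_sum δ]⟩

lemma equivSymm_apply (f : Fin d → ℕ) (k : Fin d) :
    (Finsupp.equivFunOnFinite.symm f) k = f k := rfl

lemma monIdx_mul {m : ℕ} (δ : Idx d 2) (γ : Idx d m) :
    monIdx δ * monIdx γ = monIdx (addIdx δ γ) := by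
  rw [monIdx_eq_monomial, monIdx_eq_monomial, monIdx_eq_monomial, monomial_mul, one_mul]
  have hAB : Finsupp.equivFunOnFinite.symm (δ.1 : Fin d → ℕ)
        + Finsupp.equivFunOnFinite.symm (γ.1 : Fin d → ℕ)
      = Finsupp.equivFunOnFinite.symm ((addIdx δ γ).1 : Fin d → ℕ) := by
    ext k
    rw [Finsupp.add_apply]
    show δ.1 k + γ.1 k = γ.1 k + δ.1 k
    exact add_comm _ _
  rw [hAB]

lemma degS_add (a b : Fin d →₀ ℕ) : degS (a + b) = degS a + degS b := by
  rw [degS_eq, degS_eq, degS_eq, ← Finset.sum_add_distrib]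
  exact Finset.sum_congr rfl fun k _ => rfl

lemma prod_supp (p q : MvPolynomial (Fin d) ℝ) {ν : Fin d →₀ ℕ} (hν : ν ∈ (p * q).support) :
    ∃ a ∈ p.support, ∃ b ∈ q.support, ν = a + b := by
  have := MvPolynomial.support_mul p q hν
  rw [Finset.mem_add] at this
  obtain ⟨a, ha, b, hb, hab⟩ := this
  exact ⟨a, ha, b, hb, hab.symm⟩

lemma monIdx_supp {m : ℕ} (γ : Idx d m) {ν : Fin d →₀ ℕ} (hν : ν ∈ (monIdx γ).support) :
    ν = Finsupp.equivFunOnFinite.symm γ.1 := by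
  rw [monIdx_eq_monomial] at hν
  have := MvPolynomial.support_monomial_subset hν
  exact Finset.mem_singleton.mp this

lemma vec_supp_par (u : MvPolynomial (Fin d) ℝ →ₗ[ℝ] ℝ) (hcs : CentrallySymmetric u)
    (P : PolySystem d) (hm : P.IsMonic) (hOPS : IsOPS u P) (n : ℕ) (α : Idx d n)
    {ν : Fin d →₀ ℕ} (hν : ν ∈ (P.vec n α).support) : degS ν % 2 = n % 2 := by
  by_contra h
  exact mem_support_iff.mp hν (parity_coeff u hcs P hm hOPS n α ν h)

lemma lamPoly_eq (a2 : Idx d 2 → ℝ) (a0 : ℝ) :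
    lamPoly a2 0 a0 = (∑ α : Idx d 2, a2 α • monIdx α) + C a0 := by
  simp [lamPoly]

lemma lam_supp (a2 : Idx d 2 → ℝ) (a0 : ℝ) {ν : Fin d →₀ ℕ}
    (hν : ν ∈ (lamPoly a2 0 a0).support) : degS ν = 0 ∨ degS ν = 2 := by
  by_contra hc
  push_neg at hc
  apply mem_support_iff.mp hν
  rw [lamPoly_eq, coeff_add, coeff_C, coeff_sum]
  have h1 : ∀ α : Idx d 2, α ∈ (Finset.univ : Finset (Idx d 2)) →
      coeff ν (a2 α • monIdx α) = 0 := by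
    intro α _
    rw [coeff_smul, coeff_monIdx, if_neg, smul_zero]
    rintro rfl
    exact hc.2 (degS_idx α)
  rw [Finset.sum_eq_zero h1, if_neg, add_zero]
  intro h0
  exact hc.1 (by rw [← h0]; rfl)

lemma idx_zero_fn (α : Idx d 0) : α.1 = fun _ => 0 := by
  funext k
  have := idx_sum α
  have h2 : ∀ i ∈ (Finset.univ : Finset (Fin d)), α.1 i = 0 :=
    (Finset.sum_eq_zero_iff).mp this
  exact h2 k (Finset.mem_univ k)

lemma monIdx_zero (γ : Idx d 0) : monIdx γ = 1 := by
  rw [monIdx_eq_monomial, idx_zero_fn γ]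
  have : (Finsupp.equivFunOnFinite.symm (fun _ : Fin d => 0) : Fin d →₀ ℕ) = 0 := by
    ext k; rfl
  rw [this, monomial_zero', C_1]

lemma vec_zero_eq (P : PolySystem d) (hm : P.IsMonic) (α : Idx d 0) : P.vec 0 α = 1 := by
  ext ν
  by_cases h : degS ν = 0
  · have hν0 : ν = 0 := by
      ext k
      rw [degS_eq] at h
      have := (Finset.sum_eq_zero_iff).mp h k (Finset.mem_univ k)
      simpa using this
    subst hν0
    rw [hm 0 α 0 (by simp), coeff_one]
    have : (0 : Fin d →₀ ℕ) = Finsupp.equivFunOnFinite.symm α.1 := by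
      rw [idx_zero_fn α]; ext k; rfl
    rw [if_pos this, if_pos rfl]
  · rw [coeff_vec_high P α (Nat.pos_of_ne_zero h), coeff_one, if_neg]
    rintro rfl
    exact h rfl

lemma vec_one_eq (u : MvPolynomial (Fin d) ℝ →ₗ[ℝ] ℝ) (hcs : CentrallySymmetric u)
    (P : PolySystem d) (hm : P.IsMonic) (hOPS : IsOPS u P) (α : Idx d 1) :
    P.vec 1 α = monIdx α := by
  have h := eq_zero_of_orth u P hm hOPS 1 (P.vec 1 α - monIdx α) ?_ ?_
  · exact sub_eq_zero.mp h
  · intro ν hν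
    by_contra hcne
    have hmem : ν ∈ (P.vec 1 α - monIdx α).support := mem_support_iff.mpr hcne
    exact absurd (supp_deg_lt P hm 1 α ν hmem) (by omega)
  · intro m hm1 γ
    have hm0 : m = 0 := by omega
    subst hm0
    rw [monIdx_zero γ, one_mul, map_sub]
    have h1 : u (P.vec 1 α) = 0 := by
      have := hOPS.1 0 1 Nat.zero_lt_one zeroIdx α
      rwa [monIdx_zero zeroIdx, one_mul] at this
    have h2 : u (monIdx α) = 0 := by
      rw [monIdx_eq_monomial]
      refine hcs _ ?_
      show Odd (degS (Finsupp.equivFunOnFinite.symm (α.1 : Fin d → ℕ)))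
      rw [degS_idx α]
      exact odd_one
    rw [h1, h2, sub_zero]

lemma e2_symm (i j : Fin d) : e2 i j = e2 j i :=
  Subtype.ext (funext fun k => add_comm _ _)

lemma exists_pair (δ : Idx d 2) : ∃ i j : Fin d,
    δ.1 = fun k => (if k = i then 1 else 0) + (if k = j then 1 else 0) := by
  have hsum : ∑ k, δ.1 k = 2 := idx_sum δ
  obtain ⟨i, _, hi⟩ := Finset.exists_ne_zero_of_sum_ne_zero
    (s := Finset.univ) (f := δ.1) (by rw [hsum]; norm_num)
  have hle : δ.1 i ≤ 2 := by
    have h := Finset.single_le_sum (f := δ.1) (fun k _ => Nat.zero_le _) (Finset.mem_univ i)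
    omega
  have herase : δ.1 i + ∑ k ∈ Finset.univ.erase i, δ.1 k = 2 := by
    rw [Finset.add_sum_erase _ _ (Finset.mem_univ i), hsum]
  rcases Nat.lt_or_ge (δ.1 i) 2 with h1 | h2
  · -- δ.1 i = 1
    have hi1 : δ.1 i = 1 := by omega
    have hrest : ∑ k ∈ Finset.univ.erase i, δ.1 k = 1 := by omega
    obtain ⟨j, hjmem, hj⟩ := Finset.exists_ne_zero_of_sum_ne_zero
      (s := Finset.univ.erase i) (f := δ.1) (by rw [hrest]; norm_num)
    have hjne : j ≠ i := (Finset.mem_erase.mp hjmem).1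
    have hjle : δ.1 j ≤ 1 := by
      have h := Finset.single_le_sum (f := δ.1) (fun k _ => Nat.zero_le _) hjmem
      omega
    have hj1 : δ.1 j = 1 := by omega
    have hrest2 : ∑ k ∈ (Finset.univ.erase i).erase j, δ.1 k = 0 := by
      have := Finset.add_sum_erase _ δ.1 hjmem
      omega
    refine ⟨i, j, funext fun k => ?_⟩
    by_cases hki : k = i
    · subst hki; rw [if_pos rfl, if_neg (Ne.symm hjne)]; omega
    · by_cases hkj : k = j
      · subst hkj; rw [if_neg hki, if_pos rfl]; omega
      · rw [if_neg hki, if_neg hkj]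
        have hkmem : k ∈ (Finset.univ.erase i).erase j :=
          Finset.mem_erase.mpr ⟨hkj, Finset.mem_erase.mpr ⟨hki, Finset.mem_univ k⟩⟩
        have := (Finset.sum_eq_zero_iff).mp hrest2 k hkmem
        omega
  · -- δ.1 i = 2
    have hi2 : δ.1 i = 2 := by omega
    have hrest : ∑ k ∈ Finset.univ.erase i, δ.1 k = 0 := by omega
    refine ⟨i, i, funext fun k => ?_⟩
    by_cases hki : k = i
    · subst hki; rw [if_pos rfl]; omega
    · rw [if_neg hki]
      have hkmem : k ∈ Finset.univ.erase i :=
        Finset.mem_erase.mpr ⟨hki, Finset.mem_univ k⟩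
      have := (Finset.sum_eq_zero_iff).mp hrest k hkmem
      omega

lemma exists_unique_pair (δ : Idx d 2) :
    ∃! p : Fin d × Fin d, p.1 ≤ p.2 ∧ δ = e2 p.1 p.2 := by
  obtain ⟨i, j, hij⟩ := exists_pair δ
  have hsymm : δ = e2 i j := Subtype.ext hij
  have hkey : ∀ p : Fin d × Fin d, p.1 ≤ p.2 → δ = e2 p.1 p.2 →
      ∀ q : Fin d × Fin d, q.1 ≤ q.2 → δ = e2 q.1 q.2 → p = q := by
    rintro ⟨a, b⟩ hab hδab ⟨a', b'⟩ hab' hδab'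
    dsimp only at hab hab' hδab hδab'
    have hfn : ∀ k, ((if k = a then 1 else 0) + (if k = b then 1 else 0) : ℕ)
        = (if k = a' then 1 else 0) + (if k = b' then 1 else 0) := by
      intro k
      have h1 : (e2 a b).1 k = (e2 a' b').1 k := by rw [← hδab, ← hδab']
      exact h1
    have hge : ∀ (x y k : Fin d), k = x →
        (1:ℕ) ≤ (if k = x then 1 else 0) + (if k = y then 1 else 0) := by
      intro x y k hk
      rw [if_pos hk]
      exact Nat.le_add_right 1 _
    have hge2 : ∀ (x y k : Fin d), k = y →
        (1:ℕ) ≤ (if k = x then 1 else 0) + (if k = y then 1 else 0) := by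
      intro x y k hk
      rw [if_pos hk]
      exact Nat.le_add_left 1 _
    have hmem : ∀ k, (1:ℕ) ≤ (if k = a' then 1 else 0) + (if k = b' then 1 else 0) →
        k = a' ∨ k = b' := by
      intro k hk
      by_contra hc
      push_neg at hc
      rw [if_neg hc.1, if_neg hc.2] at hk
      omega
    have hmem' : ∀ k, (1:ℕ) ≤ (if k = a then 1 else 0) + (if k = b then 1 else 0) →
        k = a ∨ k = b := by
      intro k hk
      by_contra hc
      push_neg at hc
      rw [if_neg hc.1, if_neg hc.2] at hk
      omega
    have ha : a = a' ∨ a = b' := hmem a (by rw [← hfn a]; exact hge a b a rfl)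
    have hb : b = a' ∨ b = b' := hmem b (by rw [← hfn b]; exact hge2 a b b rfl)
    have ha' : a' = a ∨ a' = b := hmem' a' (by rw [hfn a']; exact hge a' b' a' rfl)
    have hb' : b' = a ∨ b' = b := hmem' b' (by rw [hfn b']; exact hge2 a' b' b' rfl)
    have hA : Fin.val a = Fin.val a' ∨ Fin.val a = Fin.val b' :=
      ha.imp (congrArg Fin.val) (congrArg Fin.val)
    have hB : Fin.val b = Fin.val a' ∨ Fin.val b = Fin.val b' :=
      hb.imp (congrArg Fin.val) (congrArg Fin.val)
    have hA' : Fin.val a' = Fin.val a ∨ Fin.val a' = Fin.val b :=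
      ha'.imp (congrArg Fin.val) (congrArg Fin.val)
    have hB' : Fin.val b' = Fin.val a ∨ Fin.val b' = Fin.val b :=
      hb'.imp (congrArg Fin.val) (congrArg Fin.val)
    have hab1 : Fin.val a ≤ Fin.val b := Fin.le_def.mp hab
    have hab2 : Fin.val a' ≤ Fin.val b' := Fin.le_def.mp hab'
    have hfin : Fin.val a = Fin.val a' ∧ Fin.val b = Fin.val b' := by omega
    exact Prod.ext (Fin.ext hfin.1) (Fin.ext hfin.2)
  rcases le_total i j with hle | hle
  · refine ⟨(i, j), ⟨hle, hsymm⟩, fun q hq => (hkey q hq.1 hq.2 (i, j) hle hsymm)⟩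
  · refine ⟨(j, i), ⟨hle, by rw [hsymm, e2_symm]⟩,
      fun q hq => (hkey q hq.1 hq.2 (j, i) hle (by rw [hsymm, e2_symm]))⟩

lemma sum_idx2 (f : Idx d 2 → ℝ) :
    ∑ δ : Idx d 2, f δ = ∑ i : Fin d, ∑ j : Fin d, if i ≤ j then f (e2 i j) else 0 := by
  have hsplit : ∑ p : Fin d × Fin d, (if p.1 ≤ p.2 then f (e2 p.1 p.2) else 0)
      = ∑ i : Fin d, ∑ j : Fin d, if i ≤ j then f (e2 i j) else 0 :=
    Fintype.sum_prod_type _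
  rw [← hsplit]
  have h1 : ∀ p : Fin d × Fin d, (if p.1 ≤ p.2 then f (e2 p.1 p.2) else 0)
      = ∑ δ : Idx d 2, if p.1 ≤ p.2 ∧ δ = e2 p.1 p.2 then f δ else 0 := by
    intro p
    by_cases hp : p.1 ≤ p.2
    · simp only [hp, true_and, if_true]
      rw [Finset.sum_ite_eq' Finset.univ (e2 p.1 p.2) f]
      simp
    · simp [hp]
  rw [Finset.sum_congr rfl fun p _ => h1 p, Finset.sum_comm]
  refine Finset.sum_congr rfl fun δ _ => ?_
  obtain ⟨p₀, ⟨hp₁, hp₂⟩, huniq⟩ := exists_unique_pair δ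
  have hiff : ∀ p : Fin d × Fin d, (p.1 ≤ p.2 ∧ δ = e2 p.1 p.2) ↔ p = p₀ := fun p =>
    ⟨fun h => huniq p h, fun h => h ▸ ⟨hp₁, hp₂⟩⟩
  have : ∀ p : Fin d × Fin d, (if p.1 ≤ p.2 ∧ δ = e2 p.1 p.2 then f δ else 0)
      = if p = p₀ then f δ else 0 := fun p => if_congr (hiff p) rfl rfl
  rw [Finset.sum_congr rfl fun p _ => this p,
    Finset.sum_ite_eq' Finset.univ p₀ fun _ => f δ, if_pos (Finset.mem_univ p₀)]

lemma LL_entry (n : ℕ) (i j : Fin d) (γ : Idx d n) (δ' : Idx d (n+2)) :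
    (Lmat d n j * Lmat d (n+1) i) γ δ'
      = if δ'.1 = (fun k => γ.1 k + (if k = j then 1 else 0) + (if k = i then 1 else 0))
        then 1 else 0 := by
  have hβ₀ : (fun k => γ.1 k + if k = j then 1 else 0)
      ∈ Finset.Nat.antidiagonalTuple d (n+1) := by
    rw [Finset.Nat.mem_antidiagonalTuple, Finset.sum_add_distrib, idx_sum γ,
      Finset.sum_ite_eq' Finset.univ j fun _ => 1, if_pos (Finset.mem_univ j)]
  rw [Matrix.mul_apply]
  rw [Finset.sum_eq_single (⟨_, hβ₀⟩ : Idx d (n+1))]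
  · show (if _ then (1:ℝ) else 0) * (if _ then (1:ℝ) else 0) = _
    rw [if_pos rfl, one_mul]
  · intro β _ hβ
    show (if β.1 = _ then (1:ℝ) else 0) * _ = 0
    rw [if_neg fun h => hβ (Subtype.ext h), zero_mul]
  · intro h
    exact absurd (Finset.mem_univ _) h

lemma Amat2_entry (a2 : Idx d 2 → ℝ) (n : ℕ) (γ : Idx d n) (δ' : Idx d (n+2)) :
    Amat2 a2 n γ δ' = ∑ i : Fin d, ∑ j : Fin d, if i ≤ j then
      (a2 (e2 i j) * if δ'.1 = (fun k => γ.1 k + (if k = j then 1 else 0)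
        + (if k = i then 1 else 0)) then 1 else 0) else 0 := by
  rw [Amat2]
  have h1 : ∀ (F : Fin d → Matrix (Idx d n) (Idx d (n+2)) ℝ),
      (∑ i, F i) γ δ' = ∑ i, F i γ δ' := fun F => Matrix.sum_apply _ _ _ _
  rw [h1, Finset.sum_congr rfl fun i (_ : i ∈ Finset.univ) => h1 _]
  refine Finset.sum_congr rfl fun i _ => Finset.sum_congr rfl fun j _ => ?_
  by_cases h : i ≤ j
  · rw [if_pos h, if_pos h, Matrix.smul_apply, LL_entry, smul_eq_mul]
  · rw [if_neg h, if_neg h]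
    rfl

lemma sum_HA (a2 : Idx d 2 → ℝ) (n : ℕ) (M : Idx d (n+2) → ℝ) (γ : Idx d n) :
    ∑ δ' : Idx d (n+2), M δ' * Amat2 a2 n γ δ'
      = ∑ δ : Idx d 2, a2 δ * M (addIdx δ γ) := by
  rw [sum_idx2 (fun δ => a2 δ * M (addIdx δ γ))]
  calc ∑ δ' : Idx d (n+2), M δ' * Amat2 a2 n γ δ'
      = ∑ δ' : Idx d (n+2), ∑ i : Fin d, ∑ j : Fin d, if i ≤ j then
          a2 (e2 i j) * M δ' * (if δ'.1 = (fun k => γ.1 k + (if k = j then 1 else 0)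
            + (if k = i then 1 else 0)) then 1 else 0) else 0 := by
        refine Finset.sum_congr rfl fun δ' _ => ?_
        rw [Amat2_entry, Finset.mul_sum]
        refine Finset.sum_congr rfl fun i _ => ?_
        rw [Finset.mul_sum]
        refine Finset.sum_congr rfl fun j _ => ?_
        rw [mul_ite, mul_zero]
        by_cases h : i ≤ j
        · rw [if_pos h, if_pos h]
          ring
        · rw [if_neg h, if_neg h]
    _ = ∑ i : Fin d, ∑ j : Fin d, ∑ δ' : Idx d (n+2), if i ≤ j then
          a2 (e2 i j) * M δ' * (if δ'.1 = (fun k => γ.1 k + (if k = j then 1 else 0)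
            + (if k = i then 1 else 0)) then 1 else 0) else 0 := by
        rw [Finset.sum_comm]
        exact Finset.sum_congr rfl fun i _ => Finset.sum_comm
    _ = ∑ i : Fin d, ∑ j : Fin d, if i ≤ j then a2 (e2 i j) * M (addIdx (e2 i j) γ)
          else 0 := by
        refine Finset.sum_congr rfl fun i _ => Finset.sum_congr rfl fun j _ => ?_
        by_cases h : i ≤ j
        · simp only [if_pos h]
          have hδ'₀ : (addIdx (e2 i j) γ).1 = (fun k => γ.1 k + (if k = j then 1 else 0)
              + (if k = i then 1 else 0)) := by
            funext k
            show γ.1 k + ((if k = i then 1 else 0) + (if k = j then 1 else 0)) = _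
            omega
          rw [Finset.sum_eq_single (addIdx (e2 i j) γ)]
          · rw [if_pos hδ'₀, mul_one]
          · intro β _ hβ
            rw [if_neg fun h2 => hβ (Subtype.ext (h2.trans hδ'₀.symm)), mul_zero]
          · intro h2
            exact absurd (Finset.mem_univ _) h2
        · simp only [if_neg h]
          exact Finset.sum_const_zero

lemma matVec_apply {a b : Type} [Fintype b] (M : Matrix a b ℝ)
    (w : b → MvPolynomial (Fin d) ℝ) (i : a) : matVec M w i = ∑ j, M i j • w j := rfl

lemma lam_mul (u : MvPolynomial (Fin d) ℝ →ₗ[ℝ] ℝ) (a2 : Idx d 2 → ℝ) (a0 : ℝ)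
    (p : MvPolynomial (Fin d) ℝ) :
    u (lamPoly a2 0 a0 * p) = (∑ δ : Idx d 2, a2 δ * u (monIdx δ * p)) + a0 * u p := by
  rw [lamPoly_eq, add_mul, Finset.sum_mul, map_add, map_sum]
  congr 1
  · exact Finset.sum_congr rfl fun δ _ => by
      rw [smul_mul_assoc, _root_.map_smul, smul_eq_mul]
  · rw [← smul_eq_C_mul, _root_.map_smul, smul_eq_mul]

end Aux

/-- relation (4.12).  Let `u` be quasi-definite and centrally
symmetric and `v = λ(x)u` quasi-definite and centrally symmetric, where
`λ(x) = Σ_{i≤j} a^{(2)}_{ij}x_ix_j + a^{(0)}` has exact total degree 2.  Then the monic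
OPS `{ℙ_n}` of `u` and `{ℚ_n}` of `v` satisfy `ℙ_0 = ℚ_0`, `ℙ_1 = ℚ_1` and
`ℙ_n = ℚ_n + N_nℚ_{n-2}` for `n ≥ 2`, with `N_n = H_nA_{n-2,2}^tĤ_{n-2}⁻¹`. -/
theorem christoffel_centrally_symmetric_connection
    {d : ℕ} (hd : 1 ≤ d)
    (u v : MvPolynomial (Fin d) ℝ →ₗ[ℝ] ℝ)
    (hcs : CentrallySymmetric u) (hcsv : CentrallySymmetric v)
    (a2 : Idx d 2 → ℝ) (a0 : ℝ) (ha2 : a2 ≠ 0)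
    (hv : ∀ p : MvPolynomial (Fin d) ℝ, v p = u (lamPoly a2 0 a0 * p))
    (P : PolySystem d) (hP : IsOPS u P) (hPmonic : P.IsMonic)
    (Q : PolySystem d) (hQ : IsOPS v Q) (hQmonic : Q.IsMonic) :
    P.vec 0 = Q.vec 0 ∧ P.vec 1 = Q.vec 1 ∧
    ∀ (n : ℕ) (α : Idx d (n + 2)),
      P.vec (n + 2) α = Q.vec (n + 2) α +
        matVec (Hmat u P (n + 2) * (Amat2 a2 n)ᵀ * (Hmat v Q n)⁻¹) (Q.vec n) α := by
  refine ⟨?_, ?_, ?_⟩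
  · funext α
    rw [Aux.vec_zero_eq P hPmonic α, Aux.vec_zero_eq Q hQmonic α]
  · funext α
    rw [Aux.vec_one_eq u hcs P hPmonic hP α, Aux.vec_one_eq v hcsv Q hQmonic hQ α]
  · intro n α
    set N := Hmat u P (n + 2) * (Amat2 a2 n)ᵀ * (Hmat v Q n)⁻¹ with hN
    have hdet := Aux.Hmat_det v Q hQmonic hQ n
    set D := P.vec (n + 2) α - Q.vec (n + 2) α - matVec N (Q.vec n) α with hD
    have hD0 : D = 0 := by
      refine Aux.eq_zero_of_orth v Q hQmonic hQ (n+2) D ?_ ?_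
      · intro ν hν
        rw [hD, coeff_sub, coeff_sub]
        have h3 : coeff ν (matVec N (Q.vec n) α) = 0 := by
          rw [Aux.matVec_apply, coeff_sum]
          refine Finset.sum_eq_zero fun β _ => ?_
          rw [coeff_smul, Aux.coeff_vec_high Q β (show n < Aux.degS ν by omega), smul_zero]
        rcases eq_or_lt_of_le hν with heq | hlt
        · rw [h3, sub_zero, hPmonic (n+2) α ν heq.symm, hQmonic (n+2) α ν heq.symm,
            sub_self]
        · rw [h3, sub_zero, Aux.coeff_vec_high P α hlt, Aux.coeff_vec_high Q α hlt,
            sub_self]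
      · intro m hm γ
        have hQ2 : v (monIdx γ * Q.vec (n+2) α) = 0 := hQ.1 m (n+2) hm γ α
        have hmat : v (monIdx γ * matVec N (Q.vec n) α)
            = ∑ β, N α β * v (monIdx γ * Q.vec n β) := by
          rw [Aux.matVec_apply, Finset.mul_sum, map_sum]
          exact Finset.sum_congr rfl fun β _ => by
            rw [mul_smul_comm, _root_.map_smul, smul_eq_mul]
        rw [hD, mul_sub, mul_sub, map_sub, map_sub, hQ2, hmat]
        rcases lt_trichotomy m n with hlt | heq | hgt
        · have h1 : ∀ β, v (monIdx γ * Q.vec n β) = 0 := fun β => hQ.1 m n hlt γ β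
          have h2 : v (monIdx γ * P.vec (n+2) α) = 0 := by
            rw [hv, ← mul_assoc]
            refine Aux.kill u (P.vec (n+2) α) _ (n+2)
              (fun m' hm' δ => hP.1 m' (n+2) hm' δ α) ?_
            intro ν hν
            obtain ⟨a, ha, b, hb, rfl⟩ := Aux.prod_supp _ _ hν
            have hb' := Aux.monIdx_supp γ hb
            have hda := Aux.lam_supp a2 a0 ha
            have hdb : Aux.degS b = m := by rw [hb']; exact Aux.degS_idx γ
            rw [Aux.degS_add]
            omega
          rw [h2]
          simp [h1]
        · subst heq
          have h2 : v (monIdx γ * P.vec (m+2) α)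
              = ∑ δ : Idx d 2, a2 δ * Hmat u P (m+2) (Aux.addIdx δ γ) α := by
            rw [hv, Aux.lam_mul u a2 a0 _]
            rw [hP.1 m (m+2) (by omega) γ α, mul_zero, add_zero]
            refine Finset.sum_congr rfl fun δ _ => ?_
            rw [← mul_assoc, Aux.monIdx_mul, ← Aux.Hmat_eq u P hPmonic hP (m+2)]
          rw [h2]
          have h3 : ∑ β, N α β * v (monIdx γ * Q.vec m β)
              = ∑ δ : Idx d 2, a2 δ * Hmat u P (m+2) (Aux.addIdx δ γ) α := by
            calc ∑ β, N α β * v (monIdx γ * Q.vec m β)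
                = ∑ β, N α β * Hmat v Q m β γ := Finset.sum_congr rfl fun β _ => by
                  rw [← Aux.Hmat_eq v Q hQmonic hQ m γ β, Aux.Hmat_symm]
              _ = (N * Hmat v Q m) α γ := (Matrix.mul_apply).symm
              _ = (Hmat u P (m+2) * (Amat2 a2 m)ᵀ) α γ := by
                  rw [hN, Matrix.mul_assoc (Hmat u P (m+2) * (Amat2 a2 m)ᵀ) _ _,
                    Matrix.nonsing_inv_mul _ hdet, Matrix.mul_one]
              _ = ∑ δ' : Idx d (m+2), Hmat u P (m+2) α δ' * Amat2 a2 m γ δ' := by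
                  rw [Matrix.mul_apply]
                  exact Finset.sum_congr rfl fun δ' _ => by rw [Matrix.transpose_apply]
              _ = ∑ δ : Idx d 2, a2 δ * Hmat u P (m+2) α (Aux.addIdx δ γ) :=
                  Aux.sum_HA a2 m (fun δ' => Hmat u P (m+2) α δ') γ
              _ = ∑ δ : Idx d 2, a2 δ * Hmat u P (m+2) (Aux.addIdx δ γ) α :=
                  Finset.sum_congr rfl fun δ _ => by rw [Aux.Hmat_symm]
          rw [h3, sub_zero, sub_self]
        · have hm1 : m = n+1 := by omega
          subst hm1
          have h1 : ∀ β, v (monIdx γ * Q.vec n β) = 0 := by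
            intro β
            refine Aux.oddKill v hcsv _ ?_
            intro ν hν
            obtain ⟨a, ha, b, hb, rfl⟩ := Aux.prod_supp _ _ hν
            have ha' := Aux.monIdx_supp γ ha
            have hda : Aux.degS a = n+1 := by rw [ha']; exact Aux.degS_idx γ
            have hpb := Aux.vec_supp_par v hcsv Q hQmonic hQ n β hb
            rw [Nat.odd_iff, Aux.degS_add]
            omega
          have h2 : v (monIdx γ * P.vec (n+2) α) = 0 := by
            rw [hv, ← mul_assoc]
            refine Aux.oddKill u hcs _ ?_
            intro ν hν
            obtain ⟨c, hc, b, hb, rfl⟩ := Aux.prod_supp _ _ hν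
            obtain ⟨a, ha, e, he, rfl⟩ := Aux.prod_supp _ _ hc
            have hda := Aux.lam_supp a2 a0 ha
            have he' := Aux.monIdx_supp γ he
            have hde : Aux.degS e = n+1 := by rw [he']; exact Aux.degS_idx γ
            have hpb := Aux.vec_supp_par u hcs P hPmonic hP (n+2) α hb
            rw [Nat.odd_iff, Aux.degS_add, Aux.degS_add]
            omega
          rw [h2]
          simp [h1]
    have hfin : P.vec (n + 2) α - (Q.vec (n + 2) α + matVec N (Q.vec n) α) = 0 := by
      rw [sub_add_eq_sub_sub]
      exact hD0
    exact sub_eq_zero.mp hfin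
end

section
/- For d ≥ 2, μ > −1/2, n ≥ 2, 1 ≤ j ≤ n/2 and 1 ≤ k ≤ σ_{n−2j}, the orthonormal ball polynomials of adjacent parameters μ and μ+1 are related by P^n_{j,k}(x; μ) = a^n_j P^n_{j,k}(x; μ+1) − b^n_j P^{n−2}_{j−1,k}(x; μ+1), where a^n_j = (h_{j,n}(μ+1)/h_{j,n}(μ)) · (n−j+μ+(d−1)/2)/(n+μ+(d−1)/2) and b^n_j = (h_{j−1,n−2}(μ+1)/h_{j,n}(μ)) · (n−j−1+d/2)/(n+μ+(d−1)/2). -/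
open MvPolynomial Matrix

open MeasureTheory

/-- Generalized binomial coefficient `C(a,k) = a(a-1)⋯(a-k+1)/k!` for real `a`. -/
noncomputable def genBinom (a : ℝ) (k : ℕ) : ℝ :=
  (∏ j ∈ Finset.range k, (a - j)) / (Nat.factorial k)

/-- The Pochhammer symbol `(a)_m = a(a+1)⋯(a+m-1)`. -/
noncomputable def poch (a : ℝ) (m : ℕ) : ℝ := (ascPochhammer ℝ m).eval a

/-- The classical Jacobi polynomial `P_n^{(α,β)}` (Szegő's normalization), as a
univariate real polynomial:
`P_n^{(α,β)}(t) = Σ_{s=0}^n C(n+α, n-s) C(n+β, s) ((t-1)/2)^s ((t+1)/2)^{n-s}`. -/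
noncomputable def jacobiPoly (α β : ℝ) (n : ℕ) : Polynomial ℝ :=
  ∑ s ∈ Finset.range (n + 1),
    Polynomial.C (genBinom (n + α) (n - s) * genBinom (n + β) s * (1 / 2) ^ n) *
      (Polynomial.X - 1) ^ s * (Polynomial.X + 1) ^ (n - s)

/-- Evaluation of the Jacobi polynomial at a real point. -/
noncomputable def jacobiP (α β : ℝ) (n : ℕ) (t : ℝ) : ℝ := (jacobiPoly α β n).eval t

/-- The normalizing constant `h_{j,n}(μ)` for the orthonormal ball polynomials. -/
noncomputable def hjn (d : ℕ) (μ : ℝ) (j n : ℕ) : ℝ :=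
  Real.sqrt ((poch (μ + 1 / 2) j * poch ((d : ℝ) / 2) (n - j) *
      ((n : ℝ) - (j : ℝ) + μ + ((d : ℝ) - 1) / 2)) /
    ((Nat.factorial j : ℝ) * poch (μ + ((d : ℝ) + 1) / 2) (n - j) *
      ((n : ℝ) + μ + ((d : ℝ) - 1) / 2)))

/-- The Laplace operator on polynomials, `Δ = Σ_i ∂²/∂x_i²`. -/
noncomputable def mvLaplacian (d : ℕ) :
    MvPolynomial (Fin d) ℝ →ₗ[ℝ] MvPolynomial (Fin d) ℝ :=
  ∑ i : Fin d, ((MvPolynomial.pderiv i).toLinearMap ∘ₗ (MvPolynomial.pderiv i).toLinearMap)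

/-- `p` is a harmonic polynomial, homogeneous of degree `m`. -/
def IsHarmonicHomogeneous {d : ℕ} (p : MvPolynomial (Fin d) ℝ) (m : ℕ) : Prop :=
  p.IsHomogeneous m ∧ mvLaplacian d p = 0

/-- `σ_m = dim ℋ_m^d`, the dimension of the space of harmonic polynomials in `d`
variables homogeneous of degree `m`. -/
noncomputable def sigmaH (d m : ℕ) : ℕ :=
  Module.finrank ℝ
    ↥((MvPolynomial.homogeneousSubmodule (Fin d) ℝ m) ⊓ LinearMap.ker (mvLaplacian d))

/-- The closed unit ball in `ℝ^d`. -/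
def ballSet (d : ℕ) : Set (Fin d → ℝ) := {x | ∑ i, x i ^ 2 ≤ 1}

/-- The normalizing constant `ω_μ = Γ(μ+(d+1)/2)/(π^{d/2}Γ(μ+1/2))`. -/
noncomputable def omegaMu (d : ℕ) (μ : ℝ) : ℝ :=
  Real.Gamma (μ + ((d : ℝ) + 1) / 2) /
    (Real.pi ^ ((d : ℝ) / 2) * Real.Gamma (μ + 1 / 2))

/-- `u` is the classical ball moment functional
`⟨u_μ, p⟩ = ω_μ ∫_{𝔹^d} p(x)(1-‖x‖²)^{μ-1/2} dx`. -/
def IsBallFunctional (d : ℕ) (μ : ℝ) (u : MvPolynomial (Fin d) ℝ →ₗ[ℝ] ℝ) : Prop :=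
  ∀ p : MvPolynomial (Fin d) ℝ,
    u p = omegaMu d μ *
      ∫ x in ballSet d, (eval x p) * (1 - ∑ i, x i ^ 2) ^ (μ - 1 / 2 : ℝ)

/-- The orthonormal ball polynomial
`P^n_{j,·}(x;μ) = h_{j,n}(μ)⁻¹ P_j^{(μ-1/2,n-2j+(d-2)/2)}(2‖x‖²-1) Y(x)`,
evaluated at `x`, for a harmonic polynomial `Y` homogeneous of degree `n-2j`. -/
noncomputable def ballPval (d : ℕ) (μ : ℝ) (n j : ℕ) (Y : MvPolynomial (Fin d) ℝ)
    (x : Fin d → ℝ) : ℝ :=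
  (hjn d μ j n)⁻¹ *
    jacobiP (μ - 1 / 2) ((n : ℝ) - 2 * (j : ℝ) + ((d : ℝ) - 2) / 2) j
      (2 * (∑ i, x i ^ 2) - 1) * eval x Y

/-!
Put `x = (t-1)/2` and `y = (t+1)/2`, so that `y - x = 1`. Szegő's formula reads
`P_n^{(α,β)}(t) = F(n+α, n+β, n)` with `F(a, b, m) = ∑_{i+k=m} C(b,i) C(a,k) x^i y^k`.
Once `a` and `b` are decoupled from the degree `m`, Pascal's rule, the absorption identity
`(k+1) C(a,k+1) = a C(a-1,k)` and `(a-k) C(a,k) = a C(a-1,k)` give three contiguous relations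
for `F`, which combine into the connection formula
`(2n+α+β+1) P_n^{(α,β)} = (n+α+β+1) P_n^{(α+1,β)} - (n+β) P_{n-1}^{(α+1,β)}`.
For `α = μ-1/2`, `β = n-2j+(d-2)/2` and degree `j`, multiplying it by
`Y(x) / (h_{j,n}(μ) (n+μ+(d-1)/2))` gives the claimed identity; the normalising constants for
`μ+1` cancel because they are positive.
-/

open Finset

lemma prod_range_succ_sub (a : ℝ) (k : ℕ) :
    ∏ i ∈ range (k + 1), (a - i) = a * ∏ i ∈ range k, (a - 1 - i) := by
  rw [prod_range_succ', mul_comm, Nat.cast_zero, sub_zero]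
  congr 1
  exact prod_congr rfl fun i _ => by push_cast; ring

lemma genBinom_zero_right (a : ℝ) : genBinom a 0 = 1 := by simp [genBinom]

lemma succ_mul_genBinom_succ (a : ℝ) (k : ℕ) :
    ((k : ℝ) + 1) * genBinom a (k + 1) = a * genBinom (a - 1) k := by
  rw [genBinom, genBinom, prod_range_succ_sub, Nat.factorial_succ]
  push_cast
  field_simp

lemma sub_mul_genBinom (a : ℝ) (k : ℕ) :
    (a - k) * genBinom a k = a * genBinom (a - 1) k := by
  rw [← succ_mul_genBinom_succ, genBinom, genBinom, prod_range_succ, Nat.factorial_succ]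
  push_cast
  field_simp

lemma genBinom_succ_succ (a : ℝ) (k : ℕ) :
    genBinom (a + 1) (k + 1) = genBinom a (k + 1) + genBinom a k := by
  have h₁ := succ_mul_genBinom_succ (a + 1) k
  rw [add_sub_cancel_right] at h₁
  refine mul_left_cancel₀ (by positivity : (k : ℝ) + 1 ≠ 0) ?_
  linear_combination h₁ - succ_mul_genBinom_succ a k + sub_mul_genBinom a k

noncomputable def jacobiBinomSum (a b : ℝ) (m : ℕ) (x y : ℝ) : ℝ :=
  ∑ p ∈ antidiagonal m, genBinom b p.1 * genBinom a p.2 * (x ^ p.1 * y ^ p.2)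

lemma jacobiBinomSum_add_one_left (a b : ℝ) (m : ℕ) (x y : ℝ) :
    jacobiBinomSum (a + 1) b (m + 1) x y
      = jacobiBinomSum a b (m + 1) x y + y * jacobiBinomSum a b m x y := by
  simp only [jacobiBinomSum, Nat.sum_antidiagonal_succ', genBinom_zero_right, genBinom_succ_succ,
    mul_sum]
  rw [add_assoc, ← sum_add_distrib]
  exact congrArg _ (sum_congr rfl fun p _ => by ring)

lemma succ_mul_jacobiBinomSum_succ (a b : ℝ) (m : ℕ) (x y : ℝ) :
    ((m : ℝ) + 1) * jacobiBinomSum a b (m + 1) x y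
      = a * y * jacobiBinomSum (a - 1) b m x y + b * x * jacobiBinomSum a (b - 1) m x y := by
  set term : ℕ × ℕ → ℝ := fun p => genBinom b p.1 * genBinom a p.2 * (x ^ p.1 * y ^ p.2)
  have h_euler : ((m : ℝ) + 1) * jacobiBinomSum a b (m + 1) x y
      = ∑ p ∈ antidiagonal (m + 1), (p.2 : ℝ) * term p
        + ∑ p ∈ antidiagonal (m + 1), (p.1 : ℝ) * term p := by
    rw [jacobiBinomSum, mul_sum, ← sum_add_distrib]
    refine sum_congr rfl fun p hp => ?_
    have h : (p.1 + p.2 : ℝ) = m + 1 := by exact_mod_cast mem_antidiagonal.mp hp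
    linear_combination -term p * h
  rw [h_euler, Nat.sum_antidiagonal_succ', Nat.sum_antidiagonal_succ, jacobiBinomSum,
    jacobiBinomSum, mul_sum, mul_sum]
  simp only [term, Nat.cast_zero, zero_mul, zero_add, Nat.cast_add, Nat.cast_one]
  congr 1 <;> refine sum_congr rfl fun p _ => ?_
  · linear_combination
      (genBinom b p.1 * (x ^ p.1 * y ^ (p.2 + 1))) * succ_mul_genBinom_succ a p.2
  · linear_combination
      (genBinom a p.2 * (x ^ (p.1 + 1) * y ^ p.2)) * succ_mul_genBinom_succ b p.1

lemma jacobiBinomSum_contiguous (a b : ℝ) (m : ℕ) (x y : ℝ) :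
    a * jacobiBinomSum (a - 1) b m x y + b * jacobiBinomSum a (b - 1) m x y
      = (a + b - m) * jacobiBinomSum a b m x y := by
  simp only [jacobiBinomSum, mul_sum, ← sum_add_distrib]
  refine sum_congr rfl fun p hp => ?_
  have hm : (m : ℝ) = p.1 + p.2 := by exact_mod_cast (mem_antidiagonal.mp hp).symm
  rw [hm]
  linear_combination -(genBinom a p.2 * (x ^ p.1 * y ^ p.2)) * sub_mul_genBinom b p.1
    - (genBinom b p.1 * (x ^ p.1 * y ^ p.2)) * sub_mul_genBinom a p.2

lemma jacobiBinomSum_connection (a b : ℝ) (m : ℕ) {x y : ℝ} (hxy : y - x = 1) :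
    (a + b + 1) * jacobiBinomSum a b (m + 1) x y
      = (a + b - m) * jacobiBinomSum (a + 1) b (m + 1) x y
        - b * jacobiBinomSum a (b - 1) m x y := by
  linear_combination -(a + b - m) * jacobiBinomSum_add_one_left a b m x y
    + y * jacobiBinomSum_contiguous a b m x y + succ_mul_jacobiBinomSum_succ a b m x y
    - b * jacobiBinomSum a (b - 1) m x y * hxy

lemma jacobiP_eq_jacobiBinomSum (α β : ℝ) (n : ℕ) (t : ℝ) :
    jacobiP α β n t = jacobiBinomSum (n + α) (n + β) n ((t - 1) / 2) ((t + 1) / 2) := by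
  rw [jacobiBinomSum, Nat.sum_antidiagonal_eq_sum_range_succ fun i k =>
    genBinom (n + β) i * genBinom (n + α) k * (((t - 1) / 2) ^ i * ((t + 1) / 2) ^ k)]
  simp only [jacobiP, jacobiPoly, Polynomial.eval_finsetSum, Polynomial.eval_mul,
    Polynomial.eval_pow, Polynomial.eval_C, Polynomial.eval_X, Polynomial.eval_sub,
    Polynomial.eval_add, Polynomial.eval_one]
  refine sum_congr rfl fun s hs => ?_
  obtain ⟨k, rfl⟩ := Nat.exists_eq_add_of_le (mem_range_succ_iff.mp hs)
  rw [Nat.add_sub_cancel_left]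
  simp only [div_pow, one_pow, pow_add]
  ring

lemma jacobiP_succ_connection (α β : ℝ) (q : ℕ) (t : ℝ) :
    (2 * ((q : ℝ) + 1) + α + β + 1) * jacobiP α β (q + 1) t
      = ((q : ℝ) + 1 + α + β + 1) * jacobiP (α + 1) β (q + 1) t
        - ((q : ℝ) + 1 + β) * jacobiP (α + 1) β q t := by
  have h := jacobiBinomSum_connection ((q : ℝ) + 1 + α) ((q : ℝ) + 1 + β) q
    (x := (t - 1) / 2) (y := (t + 1) / 2) (by ring)
  simp only [jacobiP_eq_jacobiBinomSum, Nat.cast_add, Nat.cast_one]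
  rw [show (q : ℝ) + 1 + (α + 1) = q + 1 + α + 1 by ring,
    show (q : ℝ) + (α + 1) = q + 1 + α by ring, show (q : ℝ) + β = q + 1 + β - 1 by ring]
  linear_combination h

lemma hjn_pos {d : ℕ} (hd : 2 ≤ d) {ν : ℝ} (hν : -(1 / 2) < ν) {j n : ℕ} (hle : j ≤ n) :
    0 < hjn d ν j n := by
  have hd' : (2 : ℝ) ≤ d := by exact_mod_cast hd
  have hj : (j : ℝ) ≤ n := by exact_mod_cast hle
  unfold hjn poch
  refine Real.sqrt_pos.mpr (div_pos (mul_pos (mul_pos ?_ ?_) (by linarith))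
    (mul_pos (mul_pos (by positivity) ?_) (by linarith))) <;>
  exact ascPochhammer_pos _ _ (by linarith)

theorem ball_adjacent_families_general
    {d : ℕ} (hd : 2 ≤ d) {μ : ℝ} (hμ : -(1 / 2) < μ)
    {n j : ℕ} (hj1 : 1 ≤ j) (hj2 : 2 * j ≤ n)
    (Y : MvPolynomial (Fin d) ℝ) :
    ∀ x : Fin d → ℝ,
      ballPval d μ n j Y x =
        (hjn d (μ + 1) j n / hjn d μ j n) *
            (((n : ℝ) - (j : ℝ) + μ + ((d : ℝ) - 1) / 2) /
              ((n : ℝ) + μ + ((d : ℝ) - 1) / 2)) * ballPval d (μ + 1) n j Y x -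
        (hjn d (μ + 1) (j - 1) (n - 2) / hjn d μ j n) *
            (((n : ℝ) - (j : ℝ) - 1 + (d : ℝ) / 2) /
              ((n : ℝ) + μ + ((d : ℝ) - 1) / 2)) *
          ballPval d (μ + 1) (n - 2) (j - 1) Y x := by
  intro x
  obtain ⟨q, rfl⟩ : ∃ q, j = q + 1 := ⟨j - 1, by omega⟩
  obtain ⟨k, rfl⟩ : ∃ k, n = k + 2 := ⟨n - 2, by omega⟩
  have hμ' : -(1 / 2) < μ + 1 := by linarith
  have h₀ := (hjn_pos hd hμ (by omega : q + 1 ≤ k + 2)).ne'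
  have h₁ := (hjn_pos hd hμ' (by omega : q + 1 ≤ k + 2)).ne'
  have h₂ := (hjn_pos hd hμ' (by omega : q ≤ k)).ne'
  have hd' : (2 : ℝ) ≤ d := by exact_mod_cast hd
  have key := jacobiP_succ_connection (μ - 1 / 2) ((k : ℝ) - 2 * q + ((d : ℝ) - 2) / 2) q
    (2 * ∑ i, x i ^ 2 - 1)
  simp only [ballPval, Nat.add_sub_cancel]
  rw [show μ + 1 - 1 / 2 = μ - 1 / 2 + 1 by ring,
    show ((k + 2 : ℕ) : ℝ) - 2 * ((q + 1 : ℕ) : ℝ) + ((d : ℝ) - 2) / 2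
      = (k : ℝ) - 2 * q + ((d : ℝ) - 2) / 2 by push_cast; ring]
  set r := 2 * ∑ i, x i ^ 2 - 1
  set J₁ := jacobiP (μ - 1 / 2) ((k : ℝ) - 2 * q + ((d : ℝ) - 2) / 2) (q + 1) r
  set J₂ := jacobiP (μ - 1 / 2 + 1) ((k : ℝ) - 2 * q + ((d : ℝ) - 2) / 2) (q + 1) r
  set J₃ := jacobiP (μ - 1 / 2 + 1) ((k : ℝ) - 2 * q + ((d : ℝ) - 2) / 2) q r
  field_simp
  rw [eq_div_iff (ne_of_gt (by push_cast; linarith))]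
  push_cast
  linear_combination 2 * eval x Y * key

/-- connection for adjacent families of ball polynomials.
For `d ≥ 2`, `μ > -1/2`, `n ≥ 2`, `1 ≤ j ≤ n/2`, and a harmonic polynomial `Y`
homogeneous of degree `n-2j` (for instance an element `Y_k^{n-2j}` of an orthonormal
basis of spherical harmonics, `1 ≤ k ≤ σ_{n-2j}`),
`P^n_{j,k}(x;μ) = a^n_j P^n_{j,k}(x;μ+1) - b^n_j P^{n-2}_{j-1,k}(x;μ+1)`. -/
theorem ball_adjacent_families
    {d : ℕ} (hd : 2 ≤ d) {μ : ℝ} (hμ : -(1 / 2) < μ)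
    {n j : ℕ} (hn : 2 ≤ n) (hj1 : 1 ≤ j) (hj2 : 2 * j ≤ n)
    (Y : MvPolynomial (Fin d) ℝ) (hY : IsHarmonicHomogeneous Y (n - 2 * j)) :
    ∀ x : Fin d → ℝ,
      ballPval d μ n j Y x =
        (hjn d (μ + 1) j n / hjn d μ j n) *
            (((n : ℝ) - (j : ℝ) + μ + ((d : ℝ) - 1) / 2) /
              ((n : ℝ) + μ + ((d : ℝ) - 1) / 2)) * ballPval d (μ + 1) n j Y x -
        (hjn d (μ + 1) (j - 1) (n - 2) / hjn d μ j n) *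
            (((n : ℝ) - (j : ℝ) - 1 + (d : ℝ) / 2) /
              ((n : ℝ) + μ + ((d : ℝ) - 1) / 2)) *
          ballPval d (μ + 1) (n - 2) (j - 1) Y x :=
  ball_adjacent_families_general hd hμ hj1 hj2 Y
end

section
/- Let d ≥ 2, μ ≥ 0, λ > 0, and let v be the Uvarov modification ⟨v,p⟩ = ⟨u_μ,p⟩ + λ p(0) of the ball moment functional. Then lim_{n→∞} K_n(v; 0, 0) = 1/λ. -/
/-!
Let `a_n = K_n(v;0,0)` and `k_n = K_n(v;·,0)`. The kernel reproduces: `⟨v, k_n q⟩ = q(0)` for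
`deg q ≤ n`, so `a_n = ⟨v, k_n²⟩ = ⟨u_μ, k_n²⟩ + λ a_n² ≥ λ a_n²`, whence `a_n ≤ 1/λ`.
Conversely, the bump `q_N = (1 - ‖x‖²)^N` has `q_N(0) = 1` and degree `2N`, so for `2N ≤ n`
Cauchy–Schwarz applied to `⟨v, k_n q_N⟩ = 1` gives `a_n ≥ 1/⟨v, q_N²⟩ = 1/(λ + ⟨u_μ, q_N²⟩)`.
Since `q_N → 0` away from the origin, `⟨u_μ, q_N²⟩ → 0` by dominated convergence.
-/

open MvPolynomial Matrix

open MeasureTheory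

open Filter Topology

section OrthogonalPolynomials

variable {d : ℕ} {v : MvPolynomial (Fin d) ℝ →ₗ[ℝ] ℝ} {Q : PolySystem d}

theorem PolySystem.linearMap_eq_of_totalDegree_le {M : Type*} [AddCommMonoid M] [Module ℝ M]
    (Q : PolySystem d) {f g : MvPolynomial (Fin d) ℝ →ₗ[ℝ] M} {n : ℕ}
    (h : ∀ m ≤ n, ∀ α : Idx d m, f (Q.vec m α) = g (Q.vec m α))
    {p : MvPolynomial (Fin d) ℝ} (hp : p.totalDegree ≤ n) : f p = g p := by
  refine LinearMap.eqOn_span' ?_ (Q.spans n p hp)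
  rintro _ ⟨m, hm, α, rfl⟩
  exact h m hm α

theorem totalDegree_monIdx_le {n : ℕ} (α : Idx d n) : (monIdx α).totalDegree ≤ n := by
  refine (totalDegree_monomial_le _ _).trans_eq ?_
  have := (Finset.Nat.mem_antidiagonalTuple).1 α.2
  simpa [Finsupp.degree, Finsupp.sum_fintype] using this

theorem IsOPS.apply_mul_vec_of_totalDegree_lt (hQ : IsOPS v Q) {n : ℕ} (β : Idx d n)
    {p : MvPolynomial (Fin d) ℝ} (hp : p.totalDegree < n) : v (p * Q.vec n β) = 0 := by
  rw [p.as_sum, Finset.sum_mul, map_sum]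
  refine Finset.sum_eq_zero fun ν hν => ?_
  have hdeg : ∑ i, ν i < n := by
    have := le_totalDegree hν
    rw [Finsupp.sum_fintype _ _ fun _ => rfl] at this
    omega
  have hmon : monomial ν (coeff ν p) = coeff ν p •
      monIdx (⟨ν, Finset.Nat.mem_antidiagonalTuple.2 rfl⟩ : Idx d (∑ i, ν i)) := by
    simp [monIdx, Finsupp.equivFunOnFinite_symm_coe, smul_monomial]
  rw [hmon, smul_mul_assoc, map_smul, hQ.1 _ _ hdeg, smul_zero]

theorem IsOPS.apply_vec_mul_vec_of_ne (hQ : IsOPS v Q) {m n : ℕ} (hmn : m ≠ n)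
    (α : Idx d m) (β : Idx d n) : v (Q.vec m α * Q.vec n β) = 0 := by
  rcases hmn.lt_or_gt with h | h
  · exact hQ.apply_mul_vec_of_totalDegree_lt β ((Q.degree_eq m α).trans_lt h)
  · rw [mul_comm]
    exact hQ.apply_mul_vec_of_totalDegree_lt α ((Q.degree_eq n β).trans_lt h)

theorem Hmat_transpose (v : MvPolynomial (Fin d) ℝ →ₗ[ℝ] ℝ) (Q : PolySystem d) (n : ℕ) :
    (Hmat v Q n)ᵀ = Hmat v Q n := by
  ext α β
  simp [Hmat, mul_comm]

/- If `H_n c = 0`, then `p = c · ℙ_n` is `v`-orthogonal to all of `ℙ_0, …, ℙ_n`, hence to every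
polynomial of degree `≤ n`; in particular `⟨v, 𝕏_n ℙ_n^t⟩ c = 0`, which forces `c = 0`. -/
theorem IsOPS.isUnit_det_Hmat (hQ : IsOPS v Q) (n : ℕ) : IsUnit (Hmat v Q n).det := by
  rw [isUnit_iff_ne_zero]
  intro hdet
  obtain ⟨c, hc0, hHc⟩ := Matrix.exists_mulVec_eq_zero_iff.2 hdet
  set p := ∑ β, c β • Q.vec n β
  have hmul : ∀ q, v (q * p) = ∑ β, c β * v (q * Q.vec n β) := fun q => by
    simp [p, Finset.mul_sum]
  have horth : ∀ m ≤ n, ∀ α : Idx d m, v.comp ((LinearMap.mul ℝ _).flip p) (Q.vec m α) =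
      (0 : MvPolynomial (Fin d) ℝ →ₗ[ℝ] ℝ) (Q.vec m α) := by
    intro m hm α
    simp only [LinearMap.comp_apply, LinearMap.flip_apply, LinearMap.mul_apply',
      LinearMap.zero_apply]
    rcases hm.lt_or_eq with hlt | rfl
    · rw [hmul]
      exact Finset.sum_eq_zero fun β _ => by rw [hQ.apply_vec_mul_vec_of_ne hlt.ne, mul_zero]
    · rw [hmul]
      simpa [Hmat, Matrix.mulVec, dotProduct, mul_comm] using congrFun hHc α
  have hS : (Matrix.of fun γ β : Idx d n => v (monIdx γ * Q.vec n β)) *ᵥ c = 0 := by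
    ext γ
    have := Q.linearMap_eq_of_totalDegree_le horth (totalDegree_monIdx_le γ)
    simp only [LinearMap.comp_apply, LinearMap.flip_apply, LinearMap.mul_apply',
      LinearMap.zero_apply, hmul] at this
    simp [Matrix.mulVec, dotProduct, ← this, mul_comm]
  exact hc0 (Matrix.eq_zero_of_mulVec_eq_zero (hQ.2 n).ne_zero hS)

/-- The polynomial `x ↦ K_n(v; x, 0)`. -/
noncomputable def kerPolyAtZero (v : MvPolynomial (Fin d) ℝ →ₗ[ℝ] ℝ) (Q : PolySystem d) (n : ℕ) :
    MvPolynomial (Fin d) ℝ :=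
  ∑ m ∈ Finset.range (n + 1),
    ∑ α, ((Hmat v Q m)⁻¹ *ᵥ fun β => eval 0 (Q.vec m β)) α • Q.vec m α

theorem eval_zero_kerPolyAtZero (v : MvPolynomial (Fin d) ℝ →ₗ[ℝ] ℝ) (Q : PolySystem d)
    (n : ℕ) : eval 0 (kerPolyAtZero v Q n) = kerLT v Q (n + 1) 0 0 := by
  simp only [kerPolyAtZero, kerLT, kerP, map_sum, smul_eval, Matrix.mulVec, dotProduct,
    Finset.sum_mul]
  refine Finset.sum_congr rfl fun m _ => Finset.sum_congr rfl fun α _ =>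
    Finset.sum_congr rfl fun β _ => ?_
  ring

theorem totalDegree_kerPolyAtZero_le (v : MvPolynomial (Fin d) ℝ →ₗ[ℝ] ℝ) (Q : PolySystem d)
    (n : ℕ) : (kerPolyAtZero v Q n).totalDegree ≤ n := by
  refine (totalDegree_finsetSum _ _).trans (Finset.sup_le fun m hm => ?_)
  refine (totalDegree_finsetSum _ _).trans (Finset.sup_le fun α _ => ?_)
  refine (totalDegree_smul_le _ _).trans ?_
  rw [Q.degree_eq]
  exact Nat.lt_succ_iff.1 (Finset.mem_range.1 hm)

theorem IsOPS.apply_kerPolyAtZero_mul_vec (hQ : IsOPS v Q) {m n : ℕ} (hmn : m ≤ n)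
    (β : Idx d m) : v (kerPolyAtZero v Q n * Q.vec m β) = eval 0 (Q.vec m β) := by
  set w : Idx d m → ℝ := fun γ => eval 0 (Q.vec m γ)
  have hH : ((Hmat v Q m)⁻¹ *ᵥ w) ᵥ* Hmat v Q m = w := by
    rw [← Matrix.mulVec_transpose, Hmat_transpose, Matrix.mulVec_mulVec,
      Matrix.mul_nonsing_inv _ (hQ.isUnit_det_Hmat m), Matrix.one_mulVec]
  rw [kerPolyAtZero, Finset.sum_mul, map_sum,
    Finset.sum_eq_single_of_mem m (Finset.mem_range.2 (Nat.lt_succ_of_le hmn)) fun k _ hk => by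
      simp [Finset.sum_mul, hQ.apply_vec_mul_vec_of_ne hk]]
  simp only [Finset.sum_mul, map_sum, smul_mul_assoc, map_smul, smul_eq_mul]
  exact congrFun hH β

theorem IsOPS.apply_kerPolyAtZero_mul (hQ : IsOPS v Q) {n : ℕ} {p : MvPolynomial (Fin d) ℝ}
    (hp : p.totalDegree ≤ n) : v (kerPolyAtZero v Q n * p) = eval 0 p := by
  have := Q.linearMap_eq_of_totalDegree_le
    (f := v.comp (LinearMap.mul ℝ _ (kerPolyAtZero v Q n)))
    (g := (aeval (0 : Fin d → ℝ)).toLinearMap)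
    (fun m hm β => by simpa using hQ.apply_kerPolyAtZero_mul_vec hm β) hp
  simpa using this

theorem IsOPS.apply_kerPolyAtZero_mul_self (hQ : IsOPS v Q) (n : ℕ) :
    v (kerPolyAtZero v Q n * kerPolyAtZero v Q n) = kerLT v Q (n + 1) 0 0 := by
  rw [hQ.apply_kerPolyAtZero_mul (totalDegree_kerPolyAtZero_le v Q n),
    eval_zero_kerPolyAtZero]

end OrthogonalPolynomials

theorem sq_apply_mul_le_apply_mul_self_mul {A : Type*} [CommRing A] [Algebra ℝ A]
    (φ : A →ₗ[ℝ] ℝ) (hφ : ∀ p, 0 ≤ φ (p * p)) (p q : A) :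
    φ (p * q) ^ 2 ≤ φ (p * p) * φ (q * q) := by
  have hquad : ∀ t : ℝ, 0 ≤ φ (p * p) * (t * t) + 2 * φ (p * q) * t + φ (q * q) := by
    intro t
    have hexp : (t • p + q) * (t • p + q) = (t * t) • (p * p) + (2 * t) • (p * q) + q * q := by
      simp only [Algebra.smul_def, map_mul, map_ofNat]
      ring
    have := hφ (t • p + q)
    rw [hexp, map_add, map_add, map_smul, map_smul, smul_eq_mul, smul_eq_mul] at this
    linarith
  have := discrim_le_zero hquad
  rw [discrim] at this
  linarith

section KernelBounds

variable {d : ℕ} {v : MvPolynomial (Fin d) ℝ →ₗ[ℝ] ℝ} {Q : PolySystem d}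

theorem IsOPS.one_div_le_kerLT (hQ : IsOPS v Q) (hv : ∀ p, 0 ≤ v (p * p)) {n : ℕ}
    {q : MvPolynomial (Fin d) ℝ} (hq : q.totalDegree ≤ n) (hq0 : eval 0 q = 1) :
    1 / v (q * q) ≤ kerLT v Q (n + 1) 0 0 := by
  have hcs := sq_apply_mul_le_apply_mul_self_mul v hv (kerPolyAtZero v Q n) q
  rw [hQ.apply_kerPolyAtZero_mul hq, hq0, hQ.apply_kerPolyAtZero_mul_self] at hcs
  have hqq : 0 < v (q * q) := by
    nlinarith [hv q, hv (kerPolyAtZero v Q n), hQ.apply_kerPolyAtZero_mul_self n]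
  rw [div_le_iff₀ hqq]
  linarith

theorem IsOPS.kerLT_le_one_div_of_add_dirac (hQ : IsOPS v Q)
    {u : MvPolynomial (Fin d) ℝ →ₗ[ℝ] ℝ} (hu : ∀ p, 0 ≤ u (p * p)) {lam : ℝ} (hlam : 0 < lam)
    (hv : ∀ p, v p = u p + lam * eval 0 p) (n : ℕ) :
    kerLT v Q (n + 1) 0 0 ≤ 1 / lam := by
  have hK := hQ.apply_kerPolyAtZero_mul_self n
  rw [hv, RingHom.map_mul, eval_zero_kerPolyAtZero] at hK
  rw [le_div_iff₀ hlam]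
  nlinarith [hu (kerPolyAtZero v Q n), sq_nonneg (kerLT v Q (n + 1) 0 0)]

end KernelBounds

section Ball

variable {d : ℕ}

theorem omegaMu_pos {μ : ℝ} (hμ : -1 / 2 < μ) : 0 < omegaMu d μ := by
  have hd : (0 : ℝ) ≤ d := d.cast_nonneg
  unfold omegaMu
  have := Real.Gamma_pos_of_pos (s := μ + (d + 1) / 2) (by linarith)
  have := Real.Gamma_pos_of_pos (s := μ + 1 / 2) (by linarith)
  have := Real.rpow_pos_of_pos Real.pi_pos ((d : ℝ) / 2)
  positivity

theorem measurableSet_ballSet : MeasurableSet (ballSet d) :=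
  measurableSet_le (by fun_prop) measurable_const

theorem ballSet_subset_closedBall : ballSet d ⊆ Metric.closedBall 0 1 := by
  intro x hx
  rw [Metric.mem_closedBall, dist_zero_right, pi_norm_le_iff_of_nonneg zero_le_one]
  intro i
  rw [Real.norm_eq_abs, ← sq_le_one_iff_abs_le_one]
  exact (Finset.single_le_sum (fun j _ => sq_nonneg (x j)) (Finset.mem_univ i)).trans hx

theorem volume_ballSet_lt_top : volume (ballSet d) < ⊤ :=
  (measure_mono ballSet_subset_closedBall).trans_lt measure_closedBall_lt_top

theorem IsBallFunctional.apply_nonneg {μ : ℝ} (hμ : -1 / 2 < μ)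
    {u : MvPolynomial (Fin d) ℝ →ₗ[ℝ] ℝ} (hu : IsBallFunctional d μ u)
    {p : MvPolynomial (Fin d) ℝ} (hp : ∀ x ∈ ballSet d, 0 ≤ eval x p) : 0 ≤ u p := by
  rw [hu]
  refine mul_nonneg (omegaMu_pos hμ).le (setIntegral_nonneg measurableSet_ballSet fun x hx => ?_)
  have hx' : ∑ i, x i ^ 2 ≤ 1 := hx
  exact mul_nonneg (hp x hx) (Real.rpow_nonneg (by linarith) _)

theorem IsBallFunctional.apply_mul_self_nonneg {μ : ℝ} (hμ : -1 / 2 < μ)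
    {u : MvPolynomial (Fin d) ℝ →ₗ[ℝ] ℝ} (hu : IsBallFunctional d μ u)
    (p : MvPolynomial (Fin d) ℝ) : 0 ≤ u (p * p) :=
  hu.apply_nonneg hμ fun x _ => by rw [RingHom.map_mul]; exact mul_self_nonneg _

noncomputable def ballBump (d N : ℕ) : MvPolynomial (Fin d) ℝ := (1 - ∑ i, X i ^ 2) ^ N

theorem eval_ballBump (N : ℕ) (x : Fin d → ℝ) :
    eval x (ballBump d N) = (1 - ∑ i, x i ^ 2) ^ N := by
  simp [ballBump]

theorem eval_zero_ballBump (N : ℕ) : eval 0 (ballBump d N) = 1 := by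
  rw [eval_ballBump]
  simp

theorem totalDegree_ballBump_le (N : ℕ) : (ballBump d N).totalDegree ≤ 2 * N := by
  have hbase : (1 - ∑ i : Fin d, X i ^ 2 : MvPolynomial (Fin d) ℝ).totalDegree ≤ 2 := by
    refine (totalDegree_sub _ _).trans (max_le (by simp) ?_)
    refine (totalDegree_finsetSum _ _).trans (Finset.sup_le fun i _ => ?_)
    exact (totalDegree_X_pow i 2).le
  calc (ballBump d N).totalDegree ≤ N * 2 := (totalDegree_pow _ _).trans (by gcongr)
    _ = 2 * N := mul_comm _ _

theorem ballBump_mul_self (N : ℕ) : ballBump d N * ballBump d N = ballBump d (2 * N) := by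
  rw [ballBump, ballBump, ← pow_add, two_mul]

theorem tendsto_setIntegral_ballSet_pow_mul_rpow [NeZero d] {s : ℝ} (hs : -1 < s) :
    Tendsto (fun N : ℕ => ∫ x in ballSet d, (1 - ∑ i, x i ^ 2) ^ (N + 1) *
      (1 - ∑ i, x i ^ 2) ^ s) atTop (𝓝 0) := by
  set t : (Fin d → ℝ) → ℝ := fun x => 1 - ∑ i, x i ^ 2
  have ht_mem : ∀ x ∈ ballSet d, 0 ≤ t x ∧ t x ≤ 1 := fun x hx =>
    ⟨sub_nonneg.2 hx, sub_le_self _ (Finset.sum_nonneg fun i _ => sq_nonneg (x i))⟩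
  have ht_lt : ∀ x, x ≠ 0 → t x < 1 := by
    intro x hx
    obtain ⟨i, hi⟩ := Function.ne_iff.1 hx
    have := Finset.single_le_sum (fun j _ => sq_nonneg (x j)) (Finset.mem_univ i)
    have : 0 < x i ^ 2 := (sq_nonneg _).lt_of_ne (pow_ne_zero 2 hi).symm
    simp only [t]
    linarith
  have hbound : ∀ N : ℕ, ∀ x ∈ ballSet d, ‖t x ^ (N + 1) * t x ^ s‖ ≤ 1 := by
    intro N x hx
    obtain ⟨h0, h1⟩ := ht_mem x hx
    have hpos : (0 : ℝ) < (N + 1 : ℕ) + s := by push_cast; linarith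
    rw [← Real.rpow_natCast, ← Real.rpow_add' h0 hpos.ne', Real.norm_of_nonneg
      (Real.rpow_nonneg h0 _)]
    exact Real.rpow_le_one h0 h1 hpos.le
  have hlim : ∀ x ∈ ballSet d, x ≠ 0 →
      Tendsto (fun N : ℕ => t x ^ (N + 1) * t x ^ s) atTop (𝓝 0) := by
    intro x hx hx0
    simpa using ((tendsto_pow_atTop_nhds_zero_of_lt_one (ht_mem x hx).1 (ht_lt x hx0)).comp
      (tendsto_add_atTop_nat 1)).mul_const (t x ^ s)
  have := tendsto_integral_of_dominated_convergence (μ := volume.restrict (ballSet d))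
    (F := fun N x => t x ^ (N + 1) * t x ^ s) (fun _ => 1)
    (fun N => by fun_prop)
    (integrableOn_const volume_ballSet_lt_top.ne)
    (fun N => ae_restrict_of_forall_mem measurableSet_ballSet (hbound N))
    ((ae_restrict_of_ae (Measure.ae_ne volume 0)).mp
      (ae_restrict_of_forall_mem measurableSet_ballSet hlim))
  simpa using this

theorem IsBallFunctional.tendsto_apply_ballBump [NeZero d] {μ : ℝ} (hμ : -1 / 2 < μ)
    {u : MvPolynomial (Fin d) ℝ →ₗ[ℝ] ℝ} (hu : IsBallFunctional d μ u) :
    Tendsto (fun N => u (ballBump d N)) atTop (𝓝 0) := by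
  rw [← tendsto_add_atTop_iff_nat 1]
  convert (tendsto_setIntegral_ballSet_pow_mul_rpow (d := d) (s := μ - 1 / 2)
    (by linarith)).const_mul (omegaMu d μ) using 1
  · ext N
    rw [hu]
    simp only [eval_ballBump]
  · rw [mul_zero]

end Ball

/-- Theorem 5.4.  For the Uvarov modification `v = u_μ + λδ_0`
(`μ ≥ 0`, `λ > 0`), one has `lim_{n→∞} K_n(v;0,0) = 1/λ`. -/
theorem ball_uvarov_kernel_at_origin_limit
    {d : ℕ} (hd : 2 ≤ d) {μ : ℝ} (hμ : 0 ≤ μ) {lam : ℝ} (hlam : 0 < lam)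
    (u v : MvPolynomial (Fin d) ℝ →ₗ[ℝ] ℝ)
    (hu : IsBallFunctional d μ u)
    (hv : ∀ p : MvPolynomial (Fin d) ℝ, v p = u p + lam * eval 0 p)
    (Q : PolySystem d) (hQ : IsOPS v Q) :
    Filter.Tendsto (fun n : ℕ => kerLT v Q (n + 1) 0 0) Filter.atTop
      (nhds (1 / lam)) := by
  have : NeZero d := ⟨by omega⟩
  have hμ' : -1 / 2 < μ := by linarith
  have hu_sq := hu.apply_mul_self_nonneg hμ'
  have hv_sq : ∀ p, 0 ≤ v (p * p) := fun p => by
    rw [hv, RingHom.map_mul]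
    exact add_nonneg (hu_sq p) (mul_nonneg hlam.le (mul_self_nonneg _))
  have hbump_v : ∀ N, v (ballBump d N * ballBump d N) = lam + u (ballBump d (2 * N)) := fun N => by
    rw [hv, ballBump_mul_self, eval_zero_ballBump, mul_one, add_comm]
  have hhalf : Tendsto (fun n : ℕ => 2 * (n / 2)) atTop atTop :=
    tendsto_atTop_atTop.2 fun b => ⟨2 * b, fun n hn => by omega⟩
  have hlower : Tendsto (fun n : ℕ => 1 / v (ballBump d (n / 2) * ballBump d (n / 2))) atTop
      (𝓝 (1 / lam)) := by
    have := ((hu.tendsto_apply_ballBump hμ').comp hhalf).const_add lam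
    rw [add_zero] at this
    simpa only [hbump_v, one_div, Function.comp_def] using this.inv₀ hlam.ne'
  refine tendsto_of_tendsto_of_tendsto_of_le_of_le hlower tendsto_const_nhds (fun n => ?_)
    (hQ.kerLT_le_one_div_of_add_dirac hu_sq hlam hv)
  exact hQ.one_div_le_kerLT hv_sq ((totalDegree_ballBump_le _).trans (Nat.mul_div_le n 2))
    (eval_zero_ballBump _)
end
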